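/- Let α, b ∈ F^× with b + α² ≠ 0, and let c, s ∈ F. Then there exist d, f ∈ F such that (b + α²)·[1,c] ⊥ [1,s] ≃ b·[1,d] ⊥ [1,f]. -/

import Mathlib

/-!
Substitute `y = (b Y + a W) / t` and `z = a X + Z` (with `t = b + a²`) into
`t (x² + x y + c y²) + z² + z w + s w²`. In characteristic 2 every doubled cross term vanishes:
`z² = a² X² + Z²`, the two `a X W` terms cancel, and `t + a² = b`, so the form becomes
`b (X² + X Y + (c b / t) Y²) + Z² + Z W + (s + c a² / t) W²`.
-/

/-- The binary quadratic form `[b₁,b₂] : (x,y) ↦ b₁x² + xy + b₂y²` on `F × F`. -/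
def binQF (F : Type*) [Field F] (b₁ b₂ : F) : QuadraticForm F (F × F) :=
  LinearMap.BilinMap.toQuadraticMap (LinearMap.mk₂ F
    (fun p q : F × F => b₁ * (p.1 * q.1) + p.1 * q.2 + b₂ * (p.2 * q.2))
    (fun p p' q => by simp only [Prod.fst_add, Prod.snd_add]; ring)
    (fun a p q => by simp only [Prod.smul_fst, Prod.smul_snd, smul_eq_mul]; ring)
    (fun p q q' => by simp only [Prod.fst_add, Prod.snd_add]; ring)
    (fun a p q => by simp only [Prod.smul_fst, Prod.smul_snd, smul_eq_mul]; ring))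

section

variable {F : Type*} [Field F]

@[simp]
lemma binQF_apply (b₁ b₂ : F) (p : F × F) :
    binQF F b₁ b₂ p = b₁ * p.1 ^ 2 + p.1 * p.2 + b₂ * p.2 ^ 2 := by
  simp only [binQF, LinearMap.BilinMap.toQuadraticMap_apply, LinearMap.mk₂_apply]
  ring

def shearEquiv (a b t : F) (hb : b ≠ 0) (ht : t ≠ 0) :
    ((F × F) × (F × F)) ≃ₗ[F] ((F × F) × (F × F)) where
  toFun p := ((p.1.1, (b * p.1.2 + a * p.2.2) / t), (a * p.1.1 + p.2.1, p.2.2))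
  invFun p := ((p.1.1, (t * p.1.2 - a * p.2.2) / b), (p.2.1 - a * p.1.1, p.2.2))
  map_add' p q := by
    simp only [Prod.fst_add, Prod.snd_add, Prod.mk_add_mk]
    congr 2 <;> ring
  map_smul' r p := by
    simp only [Prod.smul_fst, Prod.smul_snd, smul_eq_mul, Prod.smul_mk, RingHom.id_apply]
    congr 2 <;> ring
  left_inv p := by
    ext <;> field_simp <;> ring
  right_inv p := by
    ext <;> field_simp <;> ring

def shearIsometryEquiv [CharP F 2] (a b c s : F) (hb : b ≠ 0) (hba : b + a ^ 2 ≠ 0) :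
    QuadraticMap.IsometryEquiv
      ((b • binQF F 1 (c * b / (b + a ^ 2))).prod (binQF F 1 (s + c * a ^ 2 / (b + a ^ 2))))
      (((b + a ^ 2) • binQF F 1 c).prod (binQF F 1 s)) where
  toLinearEquiv := shearEquiv a b (b + a ^ 2) hb hba
  map_app' := by
    rintro ⟨⟨x, y⟩, ⟨z, w⟩⟩
    have h2 : (2 : F) = 0 := CharTwo.two_eq_zero
    simp only [shearEquiv, AddHom.toFun_eq_coe, AddHom.coe_mk, QuadraticMap.prod_apply,
      smul_apply, binQF_apply, one_mul, smul_eq_mul]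
    field_simp
    linear_combination ((a * x * (z + w) + a ^ 2 * x ^ 2) * (b + a ^ 2) + a * b * c * y * w) * h2

end

theorem stmt17_general (F : Type*) [Field F] [CharP F 2] (al b : F)
    (hb : b ≠ 0) (hba : b + al ^ 2 ≠ 0) (c s : F) :
    ∃ d f : F,
      QuadraticMap.Equivalent
        (((b + al ^ 2) • binQF F 1 c).prod (binQF F 1 s))
        ((b • binQF F 1 d).prod (binQF F 1 f)) :=
  ⟨_, _, ⟨(shearIsometryEquiv al b c s hb hba).symm⟩⟩

/-- over a field of characteristic 2, if `α, b ∈ F^×` with `b + α² ≠ 0` and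
`c, s ∈ F`, then there exist `d, f ∈ F` with
`(b + α²)·[1,c] ⊥ [1,s] ≃ b·[1,d] ⊥ [1,f]`. -/
theorem stmt17 (F : Type*) [Field F] [CharP F 2] (al b : F)
    (hal : al ≠ 0) (hb : b ≠ 0) (hba : b + al ^ 2 ≠ 0) (c s : F) :
    ∃ d f : F,
      QuadraticMap.Equivalent
        (((b + al ^ 2) • binQF F 1 c).prod (binQF F 1 s))
        ((b • binQF F 1 d).prod (binQF F 1 f)) :=
  stmt17_general F al b hb hba c s
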